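/- Let (A,B) be a random pair in (0,∞)×ℝ with law μ, with E[log A] < 0, E[log⁺|B|] < ∞ and E[A^α] = 1 for some α > 0, and let ν be the law of the stationary solution X of X =_d AX + B. If P[Ax + B = x] < 1 for every x ∈ ℝ, then the support of ν is unbounded (not contained in any bounded subset of ℝ). -/

import Mathlib

open MeasureTheory ProbabilityTheory Filter Set
open scoped ENNReal Topology

/-- The topological support of a measure: points all of whose neighborhoods have
positive measure. -/
def mSupport {E : Type*} [TopologicalSpace E] {mE : MeasurableSpace E}
    (ν : Measure E) : Set E :=
  {x | ∀ U ∈ nhds x, 0 < ν U}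

lemma compl_mSupport_null {E : Type*} [TopologicalSpace E]
    [SecondCountableTopology E] {mE : MeasurableSpace E}
    (ν : Measure E) : ν (mSupport ν)ᶜ = 0 := by
  have hsub : (mSupport ν)ᶜ ⊆ ⋃₀ {U | IsOpen U ∧ ν U = 0} := by
    intro x hx
    simp only [mSupport, mem_compl_iff, mem_setOf_eq, not_forall] at hx
    obtain ⟨U, hU, hν⟩ := hx
    have hν0 : ν U = 0 := by simpa using not_lt.mp hν
    exact ⟨interior U, ⟨isOpen_interior,
      le_antisymm (le_trans (measure_mono interior_subset) hν0.le) bot_le⟩,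
      mem_interior_iff_mem_nhds.mpr hU⟩
  obtain ⟨T, hTc, hTsub, hTeq⟩ :=
    TopologicalSpace.isOpen_sUnion_countable {U | IsOpen U ∧ ν U = 0} (fun s hs => hs.1)
  refine le_antisymm ?_ bot_le
  calc ν (mSupport ν)ᶜ ≤ ν (⋃₀ T) := by rw [hTeq]; exact measure_mono hsub
    _ = 0 := (measure_sUnion_null_iff hTc).mpr fun s hs => (hTsub hs).2

lemma nonempty_inter_mSupport {E : Type*} [TopologicalSpace E]
    [SecondCountableTopology E] {mE : MeasurableSpace E}
    {ν : Measure E} {K : Set E} (hK : ν K ≠ 0) : (K ∩ mSupport ν).Nonempty := by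
  rw [nonempty_iff_ne_empty]
  intro h
  have hsub : K ⊆ (mSupport ν)ᶜ := by
    intro x hx
    by_contra hx'
    exact (eq_empty_iff_forall_notMem.mp h x) ⟨hx, not_not.mp hx'⟩
  exact hK (le_antisymm (le_trans (measure_mono hsub) (compl_mSupport_null ν).le) bot_le)


/-- If the affine recursion has no a.s. fixed point (and `E[A^α] = 1` for some `α > 0`),
then the support of the stationary law is unbounded. -/
theorem stmt_4
    {Ω : Type*} [MeasurableSpace Ω] (P : Measure Ω) [IsProbabilityMeasure P]
    (A B X : Ω → ℝ) (hAm : Measurable A) (hBm : Measurable B) (hXm : Measurable X)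
    (hApos : ∀ᵐ ω ∂P, 0 < A ω)
    (α : ℝ) (hα : 0 < α)
    (hlogA_int : Integrable (fun ω => Real.log (A ω)) P)
    (hlogA_neg : ∫ ω, Real.log (A ω) ∂P < 0)
    (hlogB : ∫⁻ ω, ENNReal.ofReal (max (Real.log |B ω|) 0) ∂P < ⊤)
    (hCramer : ∫⁻ ω, ENNReal.ofReal (A ω ^ α) ∂P = 1)
    (hindep : IndepFun (fun ω => (A ω, B ω)) X P)
    (hstat : Measure.map X P = Measure.map (fun ω => A ω * X ω + B ω) P)
    (hnofix : ∀ x : ℝ, P {ω | A ω * x + B ω = x} < 1) :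
    ¬ Bornology.IsBounded (mSupport (Measure.map X P)) := by
  intro hb
  set ν : Measure ℝ := Measure.map X P with hν
  set μ : Measure (ℝ × ℝ) := Measure.map (fun ω => (A ω, B ω)) P with hμ
  have hABm : Measurable (fun ω => (A ω, B ω)) := hAm.prodMk hBm
  have hYm : Measurable (fun ω => A ω * X ω + B ω) := (hAm.mul hXm).add hBm
  have hνprob : IsProbabilityMeasure ν := Measure.isProbabilityMeasure_map hXm.aemeasurable
  -- Step C: a point (a,b) in the support of μ with 1 < a
  have hA1 : P {ω | 1 < A ω} ≠ 0 := by
    intro h0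
    have hAle : ∀ᵐ ω ∂P, A ω ≤ 1 := by
      rw [ae_iff]; simpa [not_le] using h0
    set f : Ω → ℝ≥0∞ := fun ω => ENNReal.ofReal (A ω ^ α) with hf
    have hfm : Measurable f := (hAm.pow measurable_const).ennreal_ofReal
    have hfle : f ≤ᵐ[P] (fun _ => 1) := by
      filter_upwards [hAle, hApos] with ω h1 h2
      exact ENNReal.ofReal_le_one.mpr (Real.rpow_le_one h2.le h1 hα.le)
    have hsub : ∫⁻ ω, ((1 : ℝ≥0∞) - f ω) ∂P = ∫⁻ _, (1 : ℝ≥0∞) ∂P - ∫⁻ ω, f ω ∂P :=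
      lintegral_sub hfm (by rw [hCramer]; exact ENNReal.one_ne_top) hfle
    have hzero : ∫⁻ ω, ((1 : ℝ≥0∞) - f ω) ∂P = 0 := by
      rw [hsub, hCramer]; simp
    have hae : ∀ᵐ ω ∂P, (1 : ℝ≥0∞) - f ω = 0 :=
      (lintegral_eq_zero_iff (measurable_const.sub hfm)).mp hzero
    have hlog0 : ∀ᵐ ω ∂P, Real.log (A ω) = 0 := by
      filter_upwards [hae, hAle, hApos] with ω h1 h2 h3
      have hge : (1 : ℝ≥0∞) ≤ f ω := tsub_eq_zero_iff_le.mp h1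
      have hge' : (1 : ℝ) ≤ A ω ^ α := ENNReal.one_le_ofReal.mp hge
      have hle' : A ω ^ α ≤ 1 := Real.rpow_le_one h3.le h2 hα.le
      have heq : A ω ^ α = 1 := le_antisymm hle' hge'
      have := Real.log_rpow h3 α
      rw [heq, Real.log_one] at this
      have : α * Real.log (A ω) = 0 := this.symm
      rcases mul_eq_zero.mp this with h | h
      · exact absurd h hα.ne'
      · exact h
    have : ∫ ω, Real.log (A ω) ∂P = 0 := by
      rw [integral_congr_ae (g := fun _ => (0 : ℝ)) hlog0]; simp
    linarith
  have hμA1 : μ {q : ℝ × ℝ | 1 < q.1} ≠ 0 := by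
    rw [hμ, Measure.map_apply hABm (show MeasurableSet {q : ℝ × ℝ | 1 < q.1} from measurable_fst measurableSet_Ioi)]
    exact hA1
  obtain ⟨⟨a, b⟩, hab1, hab⟩ := nonempty_inter_mSupport hμA1
  simp only [mem_setOf_eq] at hab1
  -- Step D: invariance of the support
  have hinv : ∀ c d : ℝ, (c, d) ∈ mSupport μ → ∀ x ∈ mSupport ν,
      c * x + d ∈ mSupport ν := by
    intro c d hcd x hx U hU
    obtain ⟨U₀, hU₀sub, hU₀open, hU₀mem⟩ := mem_nhds_iff.mp hU
    have hcont : ContinuousAt (fun q : (ℝ × ℝ) × ℝ => q.1.1 * q.2 + q.1.2) ((c, d), x) := by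
      fun_prop
    have hpre : (fun q : (ℝ × ℝ) × ℝ => q.1.1 * q.2 + q.1.2) ⁻¹' U₀ ∈ 𝓝 ((c, d), x) :=
      hcont (hU₀open.mem_nhds hU₀mem)
    rw [nhds_prod_eq] at hpre
    obtain ⟨V, hV, W, hW, hVW⟩ := Filter.mem_prod_iff.mp hpre
    obtain ⟨V', hV'sub, hV'open, hV'mem⟩ := mem_nhds_iff.mp hV
    obtain ⟨W', hW'sub, hW'open, hW'mem⟩ := mem_nhds_iff.mp hW
    have hνU₀ : ν U₀ = P ((fun ω => A ω * X ω + B ω) ⁻¹' U₀) := by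
      rw [hstat, Measure.map_apply hYm hU₀open.measurableSet]
    have hsubset : (fun ω => (A ω, B ω)) ⁻¹' V' ∩ X ⁻¹' W'
        ⊆ (fun ω => A ω * X ω + B ω) ⁻¹' U₀ := by
      intro ω ⟨h1, h2⟩
      exact hVW (mk_mem_prod (hV'sub h1) (hW'sub h2))
    have hprod : P ((fun ω => (A ω, B ω)) ⁻¹' V' ∩ X ⁻¹' W')
        = μ V' * ν W' := by
      rw [hindep.measure_inter_preimage_eq_mul V' W' hV'open.measurableSet
        hW'open.measurableSet, hμ, hν, Measure.map_apply hABm hV'open.measurableSet,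
        Measure.map_apply hXm hW'open.measurableSet]
    have hμV' : 0 < μ V' := hcd V' (hV'open.mem_nhds hV'mem)
    have hνW' : 0 < ν W' := hx W' (hW'open.mem_nhds hW'mem)
    calc (0 : ℝ≥0∞) < μ V' * ν W' := ENNReal.mul_pos hμV'.ne' hνW'.ne'
      _ = P ((fun ω => (A ω, B ω)) ⁻¹' V' ∩ X ⁻¹' W') := hprod.symm
      _ ≤ P ((fun ω => A ω * X ω + B ω) ⁻¹' U₀) := measure_mono hsubset
      _ = ν U₀ := hνU₀.symm
      _ ≤ ν U := measure_mono hU₀sub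
  -- support is nonempty
  obtain ⟨x₀, -, hx₀⟩ := nonempty_inter_mSupport (K := (univ : Set ℝ)) (ν := ν)
    (by simp [measure_univ])
  -- the fixed point of x ↦ a x + b
  have ha1 : (1 : ℝ) < a := hab1
  have hane : (1 : ℝ) - a ≠ 0 := by intro h; linarith [sub_eq_zero.mp h]
  set p : ℝ := b / (1 - a) with hp
  have hfix : a * p + b = p := by
    rw [hp, mul_div_assoc', div_add' _ _ _ hane, div_left_inj' hane]
    ring
  obtain ⟨R, hR⟩ := isBounded_iff_forall_norm_le.mp hb
  by_cases hy : ∃ y ∈ mSupport ν, y ≠ p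
  · obtain ⟨y, hyS, hyp⟩ := hy
    have hc : (0 : ℝ) < |y - p| := abs_pos.mpr (sub_ne_zero.mpr hyp)
    have hn : ∀ n : ℕ, a ^ n * (y - p) + p ∈ mSupport ν := by
      intro n
      induction n with
      | zero => simpa using hyS
      | succ n ih =>
        have := hinv a b hab _ ih
        have heq : a * (a ^ n * (y - p) + p) + b = a ^ (n + 1) * (y - p) + p := by
          have : a * p + b = p := hfix
          linear_combination this
        rwa [heq] at this
    obtain ⟨n, hngt⟩ := pow_unbounded_of_one_lt ((R + |p|) / |y - p|) ha1
    have hgt : R + |p| < a ^ n * |y - p| := by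
      rw [div_lt_iff₀ hc] at hngt
      linarith
    have hRn := hR _ (hn n)
    rw [Real.norm_eq_abs] at hRn
    have h1 : |a ^ n * (y - p)| ≤ |a ^ n * (y - p) + p| + |p| := by
      have := abs_add_le (a ^ n * (y - p) + p) (-p)
      simpa using this
    have h2 : |a ^ n * (y - p)| = a ^ n * |y - p| := by
      rw [abs_mul, abs_pow, abs_of_pos (by linarith : (0:ℝ) < a)]
    linarith
  · push_neg at hy
    have hpS : p ∈ mSupport ν := by
      have := hy x₀ hx₀
      rwa [this] at hx₀
    have hcompl : ν {p}ᶜ = 0 := by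
      have hsub : ({p}ᶜ : Set ℝ) ⊆ (mSupport ν)ᶜ := by
        intro z hz hzS
        exact hz (hy z hzS)
      exact le_antisymm (le_trans (measure_mono hsub) (compl_mSupport_null ν).le) bot_le
    have hXp : ∀ᵐ ω ∂P, X ω = p := by
      rw [ae_iff]
      have : {ω | ¬ X ω = p} = X ⁻¹' {p}ᶜ := by ext ω; simp
      rw [this, ← Measure.map_apply hXm (measurableSet_singleton p).compl]
      exact hcompl
    have hYp : ∀ᵐ ω ∂P, A ω * X ω + B ω = p := by
      rw [ae_iff]
      have : {ω | ¬ A ω * X ω + B ω = p} = (fun ω => A ω * X ω + B ω) ⁻¹' {p}ᶜ := by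
        ext ω; simp
      rw [this, ← Measure.map_apply hYm (measurableSet_singleton p).compl, ← hstat]
      exact hcompl
    have hfull : ∀ᵐ ω ∂P, A ω * p + B ω = p := by
      filter_upwards [hXp, hYp] with ω h1 h2
      rwa [h1] at h2
    have h1 : P {ω | A ω * p + B ω = p} = 1 := by
      rw [measure_congr (ae_eq_univ.mpr ?_), measure_univ]
      rw [ae_iff] at hfull
      simpa [compl_setOf] using hfull
    exact absurd h1 (hnofix p).ne
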